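/- arXiv:2411.01005 — 6 statements merged into one kernel-verified Lean document; each statement's English description precedes it below -/
import Mathlib

section
/- If X is a minimal finite space and f : X → X is a continuous map homotopic to the identity, then f equals the identity. -/
/-- The minimal open set containing `x`: the intersection of all open sets containing `x`. -/
def minOpen {X : Type*} [TopologicalSpace X] (x : X) : Set X :=
  ⋂₀ {U : Set X | IsOpen U ∧ x ∈ U}

/-- The specialization order: `x ≤ y` iff `U_x ⊆ U_y`. -/
def sle {X : Type*} [TopologicalSpace X] (x y : X) : Prop := minOpen x ⊆ minOpen y

/-- Strict specialization order. -/
def slt {X : Type*} [TopologicalSpace X] (x y : X) : Prop := sle x y ∧ x ≠ y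

/-- A point `x` is up-beat if there is `y > x` such that every `z > x` satisfies `z ≥ y`. -/
def UpBeat {X : Type*} [TopologicalSpace X] (x : X) : Prop :=
  ∃ y : X, slt x y ∧ ∀ z : X, slt x z → sle y z

/-- A point `x` is down-beat if there is `y < x` such that every `z < x` satisfies `z ≤ y`. -/
def DownBeat {X : Type*} [TopologicalSpace X] (x : X) : Prop :=
  ∃ y : X, slt y x ∧ ∀ z : X, slt z x → sle z y

/-- A minimal finite space: a finite T0 space with no up-beat and no down-beat points. -/
def IsMinimalFiniteSpace (X : Type*) [TopologicalSpace X] : Prop :=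
  Finite X ∧ T0Space X ∧ ∀ x : X, ¬ UpBeat x ∧ ¬ DownBeat x

/-! A continuous self-map `g` of a finite T0 space is monotone for the specialization order.
If `g` lies below the identity and moves some point, then a minimal moved point `x` is a
down-beat point witnessed by `g x`: every `z < x` is fixed, so `z = g z ≤ g x`. Dually above
the identity. Since `X` is finite, the sets `{h | ∀ x, h x ⤳ g x}` are open in the compact-open
topology, so the identity is both an open and a closed point of `C(X, X)`, and a homotopy,
being a path in `C(X, X)`, cannot leave it. -/

open Specialization

section BeatPoints

variable {α : Type*} [PartialOrder α]

def IsDownBeat (x : α) : Prop := ∃ y < x, ∀ z < x, z ≤ y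

def IsUpBeat (x : α) : Prop := ∃ y, x < y ∧ ∀ z, x < z → y ≤ z

theorem Monotone.eq_id_of_le_id [Finite α] (hα : ∀ x : α, ¬ IsDownBeat x) {g : α → α}
    (hg : Monotone g) (hle : g ≤ id) : g = id := by
  by_contra hne
  obtain ⟨x, hmin⟩ := exists_minimal_of_wellFoundedLT (fun x => g x ≠ x) <| by
    by_contra! hfix
    exact hne (funext hfix)
  refine hα x ⟨g x, (hle x).lt_of_ne hmin.prop, fun z hz => ?_⟩
  have hfix : g z = z := not_not.mp (hmin.not_prop_of_lt hz)
  exact hfix ▸ hg hz.le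

theorem Monotone.eq_id_of_id_le [Finite α] (hα : ∀ x : α, ¬ IsUpBeat x) {g : α → α}
    (hg : Monotone g) (hge : id ≤ g) : g = id :=
  hg.dual.eq_id_of_le_id (α := αᵒᵈ) hα hge

end BeatPoints

section SpecializationOrder

variable {X : Type*} [TopologicalSpace X]

theorem minOpen_eq_nhdsKer (x : X) : minOpen x = nhdsKer {x} := by
  simp [minOpen, nhdsKer_def]

theorem sle_iff_toEquiv_le {x y : X} : sle x y ↔ toEquiv y ≤ toEquiv x := by
  rw [sle, minOpen_eq_nhdsKer, minOpen_eq_nhdsKer, ← specializes_iff_nhdsKer_subset,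
    toEquiv_le_toEquiv]

theorem slt_iff_toEquiv_lt [T0Space X] {x y : X} : slt x y ↔ toEquiv y < toEquiv x := by
  rw [slt, sle_iff_toEquiv_le, lt_iff_le_and_ne, ne_comm, Ne, Ne, toEquiv_inj]

theorem upBeat_iff_isDownBeat [T0Space X] {x : X} : UpBeat x ↔ IsDownBeat (toEquiv x) := by
  simp only [UpBeat, IsDownBeat, slt_iff_toEquiv_lt, sle_iff_toEquiv_le]
  rfl

theorem downBeat_iff_isUpBeat [T0Space X] {x : X} : DownBeat x ↔ IsUpBeat (toEquiv x) := by
  simp only [DownBeat, IsUpBeat, slt_iff_toEquiv_lt, sle_iff_toEquiv_le]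
  rfl

end SpecializationOrder

theorem ContinuousMap.isOpen_setOf_forall_specializes {Y X : Type*} [TopologicalSpace Y]
    [TopologicalSpace X] [Finite Y] [AlexandrovDiscrete X] (g : C(Y, X)) :
    IsOpen {h : C(Y, X) | ∀ y, h y ⤳ g y} := by
  simp_rw [← mem_nhdsKer_singleton, Set.ofPred_forall]
  exact isOpen_iInter_of_finite fun y => isOpen_nhdsKer.preimage (continuous_eval_const y)

namespace IsMinimalFiniteSpace

variable {X : Type*} [TopologicalSpace X]

theorem eq_id_of_forall_apply_specializes (hX : IsMinimalFiniteSpace X) {g : C(X, X)}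
    (hg : ∀ x, g x ⤳ x) : g = ContinuousMap.id X := by
  obtain ⟨_, _, hbeat⟩ := hX
  have := Finite.of_equiv X (toEquiv (α := X))
  have hmap := (Specialization.map g).monotone.eq_id_of_id_le
    (fun x => downBeat_iff_isUpBeat.not.mp (hbeat x).2) hg
  ext x
  exact congrFun hmap (toEquiv x)

theorem eq_id_of_forall_specializes_apply (hX : IsMinimalFiniteSpace X) {g : C(X, X)}
    (hg : ∀ x, x ⤳ g x) : g = ContinuousMap.id X := by
  obtain ⟨_, _, hbeat⟩ := hX
  have := Finite.of_equiv X (toEquiv (α := X))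
  have hmap := (Specialization.map g).monotone.eq_id_of_le_id
    (fun x => upBeat_iff_isDownBeat.not.mp (hbeat x).1) hg
  ext x
  exact congrFun hmap (toEquiv x)

theorem isClopen_singleton_id (hX : IsMinimalFiniteSpace X) :
    IsClopen ({ContinuousMap.id X} : Set C(X, X)) := by
  have := hX.1
  constructor
  · refine closure_subset_iff_isClosed.mp fun g hg => ?_
    have hid : ContinuousMap.id X ⤳ g := specializes_iff_mem_closure.mpr hg
    exact hX.eq_id_of_forall_specializes_apply
      (hid.mem_open g.isOpen_setOf_forall_specializes fun _ => specializes_rfl)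
  · have hnhds : {h : C(X, X) | ∀ x, h x ⤳ x} = {ContinuousMap.id X} := Set.ext fun h =>
      ⟨hX.eq_id_of_forall_apply_specializes, fun hid _ => hid ▸ specializes_rfl⟩
    exact hnhds ▸ (ContinuousMap.id X).isOpen_setOf_forall_specializes

end IsMinimalFiniteSpace

/-- If `X` is a minimal finite space and `f : X → X` is homotopic to the identity,
then `f` is the identity. -/
theorem eq_id_of_homotopic_id {X : Type*} [TopologicalSpace X]
    (hX : IsMinimalFiniteSpace X) (f : C(X, X))
    (h : f.Homotopic (ContinuousMap.id X)) : f = ContinuousMap.id X := by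
  obtain ⟨F⟩ := h
  have hrange : Set.range F.curry ⊆ {ContinuousMap.id X} :=
    (isPreconnected_range F.curry.continuous).subset_isClopen hX.isClopen_singleton_id
      ⟨ContinuousMap.id X, ⟨1, by ext; simp⟩, Set.mem_singleton _⟩
  simpa using hrange ⟨0, rfl⟩
end

section
/- If X and Y are minimal finite spaces and f : X → Y is a homotopy equivalence, then f is a homeomorphism. -/
/-! In the specialization order, if `f ≤ id` pointwise then a minimal point `x` moved by `f` would
be a down-beat point, `f x` being the largest point strictly below `x`; dually for `f ≥ id`. In a
finite space a homotopy satisfies `H_s ≤ H_t` for `s` near `t`, so the set of times at which `H`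
is the identity is clopen in `[0, 1]`. Hence on a minimal finite space every self-map homotopic to
the identity is the identity, and a homotopy inverse of `f` is an honest inverse. -/

open Filter Topology

section

variable {X : Type*} [TopologicalSpace X]

theorem sle_iff_specializes {x y : X} : sle x y ↔ x ⤳ y := by
  refine ⟨fun h => specializes_iff_forall_open.2 fun U hU hy => ?_, fun h z hz U hU => ?_⟩
  · exact h (fun _ hV => hV.2) U ⟨hU, hy⟩
  · exact hz U ⟨hU.1, h.mem_open hU.1 hU.2⟩

theorem eq_of_sle_of_sle [T0Space X] {x y : X} (hxy : sle x y) (hyx : sle y x) : x = y :=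
  ((sle_iff_specializes.1 hxy).antisymm (sle_iff_specializes.1 hyx)).eq

theorem sle_map {Y : Type*} [TopologicalSpace Y] {f : X → Y} (hf : Continuous f) {x y : X}
    (h : sle x y) : sle (f x) (f y) :=
  sle_iff_specializes.2 ((sle_iff_specializes.1 h).map hf)

section Rigidity

variable [Finite X] [T0Space X] {f : X → X}

theorem eq_id_of_forall_apply_sle (hX : ∀ x : X, ¬ DownBeat x) (hf : Continuous f)
    (hfx : ∀ x, sle (f x) x) : f = id := by
  by_contra hne
  obtain ⟨x, hx, hmin⟩ := Set.Finite.exists_minimalFor minOpen {x | f x ≠ x} (Set.toFinite _)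
    (Function.ne_iff.1 hne)
  have hfix : ∀ z, slt z x → f z = z := fun z hz =>
    by_contra fun hz' => hz.2 (eq_of_sle_of_sle hz.1 (hmin hz' hz.1))
  refine hX x ⟨f x, ⟨hfx x, hx⟩, fun z hz => ?_⟩
  simpa only [hfix z hz] using sle_map hf hz.1

theorem eq_id_of_forall_sle_apply (hX : ∀ x : X, ¬ UpBeat x) (hf : Continuous f)
    (hfx : ∀ x, sle x (f x)) : f = id := by
  by_contra hne
  obtain ⟨x, hx, hmax⟩ := Set.Finite.exists_maximalFor minOpen {x | f x ≠ x} (Set.toFinite _)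
    (Function.ne_iff.1 hne)
  have hfix : ∀ z, slt x z → f z = z := fun z hz =>
    by_contra fun hz' => hz.2 (eq_of_sle_of_sle hz.1 (hmax hz' hz.1))
  refine hX x ⟨f x, ⟨hfx x, Ne.symm hx⟩, fun z hz => ?_⟩
  simpa only [hfix z hz] using sle_map hf hz.1

end Rigidity

theorem eventually_forall_sle {T Y : Type*} [TopologicalSpace T] [TopologicalSpace Y]
    [AlexandrovDiscrete Y] [Finite X] {H : T × X → Y} (hH : Continuous H) (t₀ : T) :
    ∀ᶠ t in 𝓝 t₀, ∀ x, sle (H (t, x)) (H (t₀, x)) := by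
  refine eventually_all.2 fun x => ?_
  have hnhdsKer : nhdsKer {H (t₀, x)} ∈ 𝓝 (H (t₀, x)) :=
    isOpen_nhdsKer.mem_nhds (subset_nhdsKer (Set.mem_singleton _))
  filter_upwards [(hH.comp (continuous_id.prodMk continuous_const)).tendsto t₀ hnhdsKer]
    with t ht
  exact sle_iff_specializes.2 (mem_nhdsKer_singleton.1 ht)

theorem isClopen_setOf_forall_eq {T : Type*} [TopologicalSpace T] [Finite X] [T0Space X]
    (hX : ∀ x : X, ¬ UpBeat x ∧ ¬ DownBeat x) {H : T × X → X} (hH : Continuous H) :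
    IsClopen {t | ∀ x, H (t, x) = x} := by
  have hslice (t : T) : Continuous fun x => H (t, x) :=
    hH.comp (continuous_const.prodMk continuous_id)
  constructor
  · refine isClosed_iff_frequently.2 fun t₀ ht₀ => ?_
    obtain ⟨t, ht, hle⟩ := (ht₀.and_eventually (eventually_forall_sle hH t₀)).exists
    exact congrFun (eq_id_of_forall_sle_apply (fun x => (hX x).1) (hslice t₀)
      fun x => by simpa only [ht x] using hle x)
  · refine isOpen_iff_eventually.2 fun t₀ ht₀ => ?_
    filter_upwards [eventually_forall_sle hH t₀] with t hle
    exact congrFun (eq_id_of_forall_apply_sle (fun x => (hX x).2) (hslice t)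
      fun x => by simpa only [ht₀ x] using hle x)

theorem ContinuousMap.Homotopic.eq_id (hX : IsMinimalFiniteSpace X) {f : C(X, X)}
    (hf : f.Homotopic (ContinuousMap.id X)) : f = ContinuousMap.id X := by
  obtain ⟨_, _, hbeat⟩ := hX
  obtain ⟨H⟩ := hf
  have hfixed := (isClopen_setOf_forall_eq hbeat H.continuous).eq_univ ⟨1, H.apply_one⟩
  have h0 : (0 : unitInterval) ∈ {t | ∀ x, H (t, x) = x} := hfixed ▸ Set.mem_univ _
  ext x
  exact (H.apply_zero x).symm.trans (h0 x)

end

/-- A homotopy equivalence between minimal finite spaces is a homeomorphism. -/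
theorem isHomeomorph_of_homotopyEquiv {X Y : Type*} [TopologicalSpace X] [TopologicalSpace Y]
    (hX : IsMinimalFiniteSpace X) (hY : IsMinimalFiniteSpace Y) (f : C(X, Y))
    (h : ∃ g : C(Y, X), (g.comp f).Homotopic (ContinuousMap.id X) ∧
      (f.comp g).Homotopic (ContinuousMap.id Y)) :
    IsHomeomorph f := by
  obtain ⟨g, hgf, hfg⟩ := h
  rw [isHomeomorph_iff_exists_inverse]
  exact ⟨f.continuous, g, DFunLike.congr_fun (hgf.eq_id hX), DFunLike.congr_fun (hfg.eq_id hY),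
    g.continuous⟩
end

section
/- For each natural number k, the finite poset F_k on 2k+8 points with two levels of k+4 points each — where on each level there are exactly two vertices of comparability-degree 2 and, for each i in {3,...,k+4}, exactly one vertex of degree i; one degree-2 vertex on each level is comparable to a degree-2 vertex and the degree-(k+4) vertex of the other level, while the other degree-2 vertex is comparable to the degree-(k+3) and degree-(k+4) vertices of the other level — has trivial automorphism group. -/
/-- The comparability relation between the bottom-level vertex `i` and the top-level
vertex `j` of the asymmetric space `F k` (each level has `k + 4` vertices).
Vertices `0` and `1` of each level have degree `2`; vertex `j` with `2 ≤ j` has degree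
`k + 6 - j`, so that each level has exactly one vertex of degree `i` for each
`i ∈ {3, …, k + 4}`.  Vertex `0` is joined to the degree-`2` vertex `0` and the
degree-`(k+4)` vertex `2` of the other level; vertex `1` is joined to the
degree-`(k+4)` vertex `2` and the degree-`(k+3)` vertex `3` of the other level. -/
def frel (k : ℕ) (i j : Fin (k + 4)) : Prop :=
  (i.val = 0 ∧ (j.val = 0 ∨ j.val = 2)) ∨
  (i.val = 1 ∧ (j.val = 2 ∨ j.val = 3)) ∨
  (j.val = 0 ∧ (i.val = 0 ∨ i.val = 2)) ∨
  (j.val = 1 ∧ (i.val = 2 ∨ i.val = 3)) ∨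
  (2 ≤ i.val ∧ 2 ≤ j.val ∧ i.val + j.val ≤ k + 7)

/-- The underlying set of the two-level poset `F k` on `2k + 8` points:
`inl` is the bottom level, `inr` the top level. -/
def FSpace (k : ℕ) : Type := Fin (k + 4) ⊕ Fin (k + 4)

instance (k : ℕ) : Finite (FSpace k) := by unfold FSpace; infer_instance

/-- The partial order of `F k`: a bottom point lies below a top point exactly when
they are related by `frel`. -/
instance (k : ℕ) : PartialOrder (FSpace k) where
  le x y := x = y ∨ ∃ i j, x = Sum.inl i ∧ y = Sum.inr j ∧ frel k i j
  le_refl x := Or.inl rfl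
  le_trans x y z hxy hyz := by
    rcases hxy with rfl | ⟨i, j, rfl, rfl, h⟩
    · exact hyz
    · rcases hyz with rfl | ⟨i', j', h1, _, _⟩
      · exact Or.inr ⟨i, j, rfl, rfl, h⟩
      · exact absurd h1 (by simp)
  le_antisymm x y hxy hyx := by
    rcases hxy with rfl | ⟨i, j, rfl, rfl, h⟩
    · rfl
    · rcases hyx with h' | ⟨i', j', h1, _, _⟩
      · exact h'.symm
      · exact absurd h1 (by simp)


/-! An automorphism preserves minimal elements, so it maps each level onto itself, acting by
bijections `σ` (bottom) and `τ` (top) of `Fin (k + 4)` with `frel (σ i) (τ j) ↔ frel i j`.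
Such a pair preserves degrees. Vertex `i ≥ 2` is the only vertex of its level of degree
`k + 6 - i ≥ 3`, so it is fixed; the two degree-`2` vertices `0` and `1` are then told apart
by the fixed vertex `3`, which is joined to `1` but not to `0`. -/

open Function Finset

namespace FSpace

variable {k : ℕ}

instance : DecidableRel (frel k) := fun _ _ => by unfold frel; infer_instance

lemma frel_comm {i j : Fin (k + 4)} : frel k i j ↔ frel k j i := by
  unfold frel; omega

lemma frel_of_val_eq_two {i j : Fin (k + 4)} (hi : i.val = 2) : frel k i j := by
  have := j.isLt
  unfold frel
  omega

lemma frel_iff_of_val_eq_three {i j : Fin (k + 4)} (hi : i.val < 2) (hj : j.val = 3) :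
    frel k i j ↔ i.val = 1 := by
  unfold frel
  omega

lemma lt_iff_frel {x y : FSpace k} {i j : Fin (k + 4)} (hx : x = Sum.inl i)
    (hy : y = Sum.inr j) : x < y ↔ frel k i j := by
  subst hx hy
  refine ⟨fun h => ?_, fun h => lt_of_le_of_ne (Or.inr ⟨i, j, rfl, rfl, h⟩) Sum.inl_ne_inr⟩
  rcases h.le with h' | ⟨i', j', hi, hj, h'⟩
  · exact absurd h' Sum.inl_ne_inr
  · rwa [Sum.inl.inj hi, Sum.inr.inj hj]

lemma isMin_iff {x : FSpace k} : IsMin x ↔ x.isLeft := by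
  rcases x with i | j
  · simp only [Sum.isLeft_inl, iff_true]
    rintro y (rfl | ⟨i', j, -, h, -⟩)
    · exact le_rfl
    · exact absurd h Sum.inl_ne_inr
  · simp only [Sum.isLeft_inr, Bool.false_eq_true, iff_false]
    exact not_isMin_of_lt
      ((lt_iff_frel (i := ⟨2, by omega⟩) rfl rfl).mpr (frel_of_val_eq_two rfl))

lemma exists_bijective_of_orderIso (φ : FSpace k ≃o FSpace k) :
    ∃ σ τ : Fin (k + 4) → Fin (k + 4), Bijective σ ∧ Bijective τ ∧
      (∀ i, φ (Sum.inl i) = Sum.inl (σ i)) ∧ ∀ j, φ (Sum.inr j) = Sum.inr (τ j) := by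
  have hleft (x : FSpace k) : (φ x).isLeft = x.isLeft := by
    rw [Bool.eq_iff_iff, ← isMin_iff, ← isMin_iff, φ.isMin_apply]
  choose σ hσ using fun i => Sum.isLeft_iff.mp (hleft (Sum.inl i))
  choose τ hτ using fun j => Sum.isRight_iff.mp (Sum.isLeft_eq_false.mp (hleft (Sum.inr j)))
  refine ⟨σ, τ, Finite.injective_iff_bijective.mp fun a b hab => ?_,
    Finite.injective_iff_bijective.mp fun a b hab => ?_, hσ, hτ⟩
  · exact Sum.inl.inj <| φ.injective <| by rw [hσ, hσ, hab]
  · exact Sum.inr.inj <| φ.injective <| by rw [hτ, hτ, hab]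

variable {σ τ : Fin (k + 4) → Fin (k + 4)}

lemma frel_apply_iff (φ : FSpace k ≃o FSpace k) (hσ : ∀ i, φ (Sum.inl i) = Sum.inl (σ i))
    (hτ : ∀ j, φ (Sum.inr j) = Sum.inr (τ j)) (i j : Fin (k + 4)) :
    frel k (σ i) (τ j) ↔ frel k i j :=
  (lt_iff_frel (hσ i) (hτ j)).symm.trans (φ.lt_iff_lt.trans (lt_iff_frel rfl rfl))

lemma frel_apply_iff_symm (h : ∀ i j, frel k (σ i) (τ j) ↔ frel k i j) (j i : Fin (k + 4)) :
    frel k (τ j) (σ i) ↔ frel k j i := by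
  rw [frel_comm, h, frel_comm]

def degree (k : ℕ) (i : Fin (k + 4)) : ℕ := #{j | frel k i j}

lemma map_val_neighbours_of_lt_two {i : Fin (k + 4)} (hi : i.val < 2) :
    ({j | frel k i j} : Finset _).map Fin.valEmbedding = {2, 3 * i.val} := by
  ext n
  simp only [mem_map, mem_filter, mem_univ, true_and, Fin.valEmbedding_apply, Fin.exists_iff]
  simp only [frel, exists_prop, exists_eq_right_right, mem_insert, mem_singleton]
  omega

/-- The neighbours of `2`, of `3` and of `i ≥ 4` are `[0, k + 3]`, `[1, k + 3]` and
`[2, k + 7 - i]`. -/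
lemma map_val_neighbours_of_two_le {i : Fin (k + 4)} (hi : 2 ≤ i.val) :
    ({j | frel k i j} : Finset _).map Fin.valEmbedding =
      Ico (min (i.val - 2) 2) (min (k + 4) (k + 8 - i.val)) := by
  ext n
  simp only [mem_map, mem_filter, mem_univ, true_and, Fin.valEmbedding_apply, Fin.exists_iff]
  simp only [frel, exists_prop, exists_eq_right_right, mem_Ico]
  omega

lemma degree_eq (i : Fin (k + 4)) : degree k i = if i.val < 2 then 2 else k + 6 - i.val := by
  rw [degree, ← card_map Fin.valEmbedding]
  split_ifs with hi
  · rw [map_val_neighbours_of_lt_two hi, card_pair (by omega)]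
  · rw [map_val_neighbours_of_two_le (by omega), Nat.card_Ico]
    omega

lemma degree_eq_degree_iff {i i' : Fin (k + 4)} :
    degree k i = degree k i' ↔ i = i' ∨ i.val < 2 ∧ i'.val < 2 := by
  have := i.isLt
  have := i'.isLt
  rw [degree_eq, degree_eq, Fin.ext_iff]
  split_ifs <;> omega

lemma degree_apply (hτ : Bijective τ) (h : ∀ i j, frel k (σ i) (τ j) ↔ frel k i j)
    (i : Fin (k + 4)) : degree k (σ i) = degree k i :=
  (card_bijective τ hτ fun j => by simp only [mem_filter, mem_univ, true_and, h]).symm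

lemma apply_eq_self (hσ : Bijective σ) (hτ : Bijective τ)
    (h : ∀ i j, frel k (σ i) (τ j) ↔ frel k i j) (i : Fin (k + 4)) : σ i = i := by
  rcases degree_eq_degree_iff.mp (degree_apply hτ h i) with hi | ⟨hσi, hi⟩
  · exact hi
  have h3 : τ ⟨3, by omega⟩ = ⟨3, by omega⟩ :=
    (degree_eq_degree_iff.mp (degree_apply hσ (frel_apply_iff_symm h) _)).resolve_right
      fun h => absurd h.2 (by simp)
  have hi3 := h i ⟨3, by omega⟩
  rw [h3, frel_iff_of_val_eq_three hσi rfl, frel_iff_of_val_eq_three hi rfl] at hi3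
  exact Fin.ext (by omega)

end FSpace

/-- The poset `F k` has trivial automorphism group. -/
theorem FSpace_asymmetric (k : ℕ) (φ : FSpace k ≃o FSpace k) (x : FSpace k) : φ x = x := by
  obtain ⟨σ, τ, hσ, hτ, hφσ, hφτ⟩ := FSpace.exists_bijective_of_orderIso φ
  have h := FSpace.frel_apply_iff φ hφσ hφτ
  rcases x with i | j
  · rw [hφσ, FSpace.apply_eq_self hσ hτ h]
  · rw [hφτ, FSpace.apply_eq_self hτ hσ (FSpace.frel_apply_iff_symm h)]
end

section
/- For every finite group G there exists a finite topological space X such that the group of homotopy classes of self-homotopy equivalences of X is isomorphic to G. -/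
/-- Self-homotopy-equivalences up to homotopy. -/
def homotopySetoid (X : Type*) [TopologicalSpace X] :
    Setoid (ContinuousMap.HomotopyEquiv X X) :=
  ⟨fun f g => f.toFun.Homotopic g.toFun,
   ⟨fun _ => ContinuousMap.Homotopic.refl _, fun h => h.symm, fun h₁ h₂ => h₁.trans h₂⟩⟩

/-!
A finite T₀ space is a poset with the Alexandrov topology, continuous maps are monotone maps,
and a homotopy between maps into it is a fence of pointwise comparable maps. If the poset has no
beat points (Stong), a monotone map comparable with the identity is the identity: otherwise a
maximal (minimal) non-fixed point would be a beat point. So only the identity is homotopic to the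
identity, and `E(X)` is the automorphism group of the poset.

For a nontrivial `G` we take the height-one poset of points and blocks of a hypergraph on
`G × Slot`: at each `g` a column block (all slots over `g`), a flag, and for each `s ≠ 1` an arrow
from column `g` to column `g * s` whose size encodes `s`. An automorphism preserves sizes, hence
kinds of blocks; it moves columns by some `w : G → G`, and the arrows force `w (g * s) = w g * s`,
so `w` is a left translation. Since the blocks separate the points, the automorphism is that
translation.
-/

open Set Topology

/-- Stong's minimal finite spaces: no point `x` is a beat point, i.e. `Ioi x` has no least and
`Iio x` no greatest element. -/
def NoBeatPoints (α : Type*) [Preorder α] : Prop :=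
  ∀ x m : α, ¬ IsLeast (Ioi x) m ∧ ¬ IsGreatest (Iio x) m

section BeatPoints

variable {α : Type*} [PartialOrder α] [Finite α]

theorem eq_id_of_le_of_forall_not_isLeast (hα : ∀ x m : α, ¬ IsLeast (Ioi x) m) {f : α → α}
    (hf : Monotone f) (hle : ∀ x, x ≤ f x) : f = id := by
  by_contra hne
  obtain ⟨x₀, hx₀⟩ : ∃ x, f x ≠ x := by simpa [funext_iff] using hne
  obtain ⟨a, ha⟩ := (toFinite {x | f x ≠ x}).exists_maximal ⟨x₀, hx₀⟩
  refine hα a (f a) ⟨(hle a).lt_of_ne (Ne.symm ha.1), fun y hy => ?_⟩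
  have hfy : f y = y := not_not.1 fun h => ha.not_gt h hy
  exact hfy ▸ hf hy.le

namespace NoBeatPoints

theorem eq_id_of_le (hα : NoBeatPoints α) {f : α → α} (hf : Monotone f) (hle : ∀ x, x ≤ f x) :
    f = id :=
  eq_id_of_le_of_forall_not_isLeast (fun x m => (hα x m).1) hf hle

theorem eq_id_of_ge (hα : NoBeatPoints α) {f : α → α} (hf : Monotone f) (hge : ∀ x, f x ≤ x) :
    f = id :=
  eq_id_of_le_of_forall_not_isLeast (α := αᵒᵈ) (fun x m => (hα x m).2) hf.dual hge

end NoBeatPoints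

end BeatPoints

section AlexandrovSpaces

variable {α β : Type*} [Preorder α] [Preorder β] [TopologicalSpace α] [TopologicalSpace β]
  [Topology.IsUpperSet α] [Topology.IsUpperSet β]

def OrderIso.toHomeomorphOfIsUpperSet (e : α ≃o β) : α ≃ₜ β where
  toEquiv := e.toEquiv
  continuous_toFun := Topology.IsUpperSet.monotone_iff_continuous.1 e.monotone
  continuous_invFun := Topology.IsUpperSet.monotone_iff_continuous.1 e.symm.monotone

def Homeomorph.toOrderIsoOfIsUpperSet (h : α ≃ₜ β) : α ≃o β :=
  h.toEquiv.toOrderIso (Topology.IsUpperSet.monotone_iff_continuous.2 h.continuous)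
    (Topology.IsUpperSet.monotone_iff_continuous.2 h.symm.continuous)

end AlexandrovSpaces

/-- Near each time `t` of a homotopy `H`, the maps `H s` lie above `H t`, since `Ici` of a point
is its smallest neighbourhood. -/
theorem ContinuousMap.Homotopic.eqvGen_le {X α : Type*} [TopologicalSpace X] [Finite X]
    [PartialOrder α] [TopologicalSpace α] [Topology.IsUpperSet α] {f g : C(X, α)}
    (h : f.Homotopic g) : Relation.EqvGen (· ≤ ·) f g := by
  obtain ⟨H⟩ := h
  have hloc : ∀ t, ∀ᶠ s in 𝓝 t, H.curry t ≤ H.curry s := fun t => by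
    simp only [ContinuousMap.le_def, Filter.eventually_all]
    intro x
    have hc : Continuous fun s => H (s, x) := H.continuous.comp (.prodMk_left x)
    exact hc.continuousAt.eventually_mem
      (by rw [Topology.IsUpperSet.nhds_eq_principal_Ici]; exact Filter.mem_principal_self _)
  simpa using PreconnectedSpace.induction₂'
    (fun s t => Relation.EqvGen (· ≤ ·) (H.curry s) (H.curry t))
    (fun t => (hloc t).mono fun s hs => ⟨.rel _ _ hs, .symm _ _ (.rel _ _ hs)⟩)
    ⟨fun _ _ _ => Relation.EqvGen.trans _ _ _⟩ 0 1

theorem NoBeatPoints.eq_id_of_homotopic_id {α : Type*} [PartialOrder α] [Finite α]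
    [TopologicalSpace α] [Topology.IsUpperSet α] (hα : NoBeatPoints α) {f : C(α, α)}
    (hf : f.Homotopic (ContinuousMap.id α)) : f = ContinuousMap.id α := by
  have step {a b : C(α, α)} (hab : a ≤ b) : a = ContinuousMap.id α ↔ b = ContinuousMap.id α := by
    constructor
    · rintro rfl
      exact ContinuousMap.ext (congr_fun (hα.eq_id_of_le
        (Topology.IsUpperSet.monotone_iff_continuous.2 b.continuous) hab))
    · rintro rfl
      exact ContinuousMap.ext (congr_fun (hα.eq_id_of_ge
        (Topology.IsUpperSet.monotone_iff_continuous.2 a.continuous) hab))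
  suffices ∀ a b, Relation.EqvGen (· ≤ ·) a b →
      (a = ContinuousMap.id α ↔ b = ContinuousMap.id α) from
    (this _ _ hf.eqvGen_le).2 rfl
  intro a b h
  induction h with
  | rel _ _ h => exact step h
  | refl => exact Iff.rfl
  | symm _ _ _ ih => exact ih.symm
  | trans _ _ _ _ _ ih₁ ih₂ => exact ih₁.trans ih₂

section RigidSpaces

open ContinuousMap

variable {X : Type*} [TopologicalSpace X]
  (hX : ∀ f : C(X, X), f.Homotopic (ContinuousMap.id X) → f = ContinuousMap.id X)
include hX

namespace ContinuousMap.HomotopyEquiv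

def toHomeomorphOfRigid (f : X ≃ₕ X) : X ≃ₜ X where
  toFun := f.toFun
  invFun := f.invFun
  left_inv x := congr($(hX _ f.left_inv) x)
  right_inv x := congr($(hX _ f.right_inv) x)
  continuous_toFun := f.toFun.continuous
  continuous_invFun := f.invFun.continuous

theorem toFun_eq_of_homotopic {f g : X ≃ₕ X} (h : f.toFun.Homotopic g.toFun) :
    f.toFun = g.toFun := by
  have hinv : (g.invFun.comp f.toFun).Homotopic (ContinuousMap.id X) :=
    ((Homotopic.refl g.invFun).comp h).trans g.left_inv
  calc f.toFun = g.toFun.comp (g.invFun.comp f.toFun) := by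
        rw [← ContinuousMap.comp_assoc, hX _ g.right_inv, ContinuousMap.id_comp]
    _ = g.toFun := by rw [hX _ hinv, ContinuousMap.comp_id]

end ContinuousMap.HomotopyEquiv

def homotopyClassesEquivHomeomorph : Quotient (homotopySetoid X) ≃ (X ≃ₜ X) where
  toFun := Quotient.lift (HomotopyEquiv.toHomeomorphOfRigid hX) fun _ _ h =>
    Homeomorph.ext fun x => congr($(HomotopyEquiv.toFun_eq_of_homotopic hX h) x)
  invFun h := Quotient.mk _ h.toHomotopyEquiv
  left_inv := Quotient.ind fun _ => Quotient.sound (Homotopic.refl _)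
  right_inv _ := rfl

theorem homotopyClassesEquivHomeomorph_mk_trans (f g : X ≃ₕ X) :
    homotopyClassesEquivHomeomorph hX (Quotient.mk _ (f.trans g)) =
      homotopyClassesEquivHomeomorph hX (Quotient.mk _ g) *
        homotopyClassesEquivHomeomorph hX (Quotient.mk _ f) :=
  rfl

theorem exists_homotopyClasses_equiv {G : Type*} [Group G] (ψ : G ≃* (X ≃ₜ X)) :
    ∃ e : Quotient (homotopySetoid X) ≃ G, ∀ f g : X ≃ₕ X,
      e (Quotient.mk _ (f.trans g)) = e (Quotient.mk _ f) * e (Quotient.mk _ g) := by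
  refine ⟨((homotopyClassesEquivHomeomorph hX).trans ψ.symm.toEquiv).trans (Equiv.inv G),
    fun f g => ?_⟩
  simp [homotopyClassesEquivHomeomorph_mk_trans hX f g]

end RigidSpaces

/-- The height-one poset of the vertices and edges of the hypergraph `mem`, ordered by
incidence, with the Alexandrov topology. -/
inductive IncidencePoset {V T : Type*} (mem : T → Finset V)
  | vertex (v : V)
  | edge (τ : T)

namespace IncidencePoset

variable {V T : Type*} {mem : T → Finset V}

instance [Finite V] [Finite T] : Finite (IncidencePoset mem) :=
  Finite.of_injective (β := V ⊕ T)
    (fun | vertex v => .inl v | edge τ => .inr τ)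
    (by rintro (_ | _) (_ | _) h <;> cases h <;> rfl)

protected def Le : IncidencePoset mem → IncidencePoset mem → Prop
  | vertex v, vertex w => v = w
  | vertex v, edge τ => v ∈ mem τ
  | edge _, vertex _ => False
  | edge τ, edge σ => τ = σ

instance : PartialOrder (IncidencePoset mem) where
  le := IncidencePoset.Le
  le_refl x := by cases x <;> rfl
  le_trans x y z := by
    cases x <;> cases y <;> cases z <;> simp only [IncidencePoset.Le] <;> grind
  le_antisymm x y := by
    cases x <;> cases y <;> simp only [IncidencePoset.Le] <;> grind

instance : TopologicalSpace (IncidencePoset mem) := upperSet _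

instance : Topology.IsUpperSet (IncidencePoset mem) := ⟨rfl⟩

@[simp] theorem vertex_le_vertex {v w : V} :
    (vertex v : IncidencePoset mem) ≤ vertex w ↔ v = w := Iff.rfl

@[simp] theorem vertex_le_edge {v : V} {τ : T} :
    (vertex v : IncidencePoset mem) ≤ edge τ ↔ v ∈ mem τ := Iff.rfl

@[simp] theorem not_edge_le_vertex {v : V} {τ : T} :
    ¬ (edge τ : IncidencePoset mem) ≤ vertex v := id

@[simp] theorem edge_le_edge {τ σ : T} :
    (edge τ : IncidencePoset mem) ≤ edge σ ↔ τ = σ := Iff.rfl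

theorem not_edge_lt {τ : T} (x : IncidencePoset mem) : ¬ edge τ < x := by
  rcases x with v | σ
  · exact fun h => not_edge_le_vertex h.le
  · exact fun h => h.2 (edge_le_edge.2 (edge_le_edge.1 h.1).symm)

theorem not_lt_vertex {v : V} (x : IncidencePoset mem) : ¬ x < vertex v := by
  rcases x with w | τ
  · exact fun h => h.2 (vertex_le_vertex.2 (vertex_le_vertex.1 h.1).symm)
  · exact fun h => not_edge_le_vertex h.le

@[simp] theorem vertex_lt_edge {v : V} {τ : T} :
    (vertex v : IncidencePoset mem) < edge τ ↔ v ∈ mem τ :=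
  ⟨fun h => h.le, fun h => ⟨h, not_edge_le_vertex⟩⟩

theorem isMax_edge (τ : T) : IsMax (edge τ : IncidencePoset mem) :=
  fun x h => not_not.1 fun hx => not_edge_lt x (lt_of_le_not_ge h hx)

theorem not_isMax_vertex {v : V} {τ : T} (h : v ∈ mem τ) :
    ¬ IsMax (vertex v : IncidencePoset mem) :=
  fun hv => not_edge_le_vertex (hv (vertex_le_edge.2 h))

theorem noBeatPoints
    (hV : ∀ v, ∃ τ σ, τ ≠ σ ∧ v ∈ mem τ ∧ v ∈ mem σ)
    (hT : ∀ τ, ∃ v w, v ≠ w ∧ v ∈ mem τ ∧ w ∈ mem τ) :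
    NoBeatPoints (IncidencePoset mem) := by
  refine fun x m => ⟨fun ⟨hxm, hm⟩ => ?_, fun ⟨hmx, hm⟩ => ?_⟩
  · rcases x with v | τ
    · obtain ⟨τ, σ, hne, hτ, hσ⟩ := hV v
      rcases m with w | ρ
      · exact not_lt_vertex _ hxm
      · exact hne ((edge_le_edge.1 (hm (vertex_lt_edge.2 hτ))).symm.trans
          (edge_le_edge.1 (hm (vertex_lt_edge.2 hσ))))
    · exact not_edge_lt _ hxm
  · rcases x with v | τ
    · exact not_lt_vertex _ hmx
    · obtain ⟨v, w, hne, hv, hw⟩ := hT τ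
      rcases m with u | ρ
      · exact hne ((vertex_le_vertex.1 (hm (vertex_lt_edge.2 hv))).trans
          (vertex_le_vertex.1 (hm (vertex_lt_edge.2 hw))).symm)
      · exact not_edge_lt _ hmx

section Automorphisms

variable (hcover : ∀ v, ∃ τ, v ∈ mem τ) (φ : IncidencePoset mem ≃o IncidencePoset mem)
include hcover

theorem exists_apply_vertex_eq (v : V) : ∃ w, φ (vertex v) = vertex w := by
  obtain ⟨τ, hτ⟩ := hcover v
  rcases h : φ (vertex v) with w | σ
  · exact ⟨w, rfl⟩
  · exact absurd (φ.isMax_apply.1 (h ▸ isMax_edge σ)) (not_isMax_vertex hτ)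

theorem exists_apply_edge_eq (τ : T) : ∃ σ, φ (edge τ) = edge σ := by
  rcases h : φ (edge τ) with w | σ
  · obtain ⟨σ, hσ⟩ := hcover w
    exact absurd (h ▸ φ.isMax_apply.2 (isMax_edge τ)) (not_isMax_vertex hσ)
  · exact ⟨σ, rfl⟩

variable {φ} {ρ : V → V} {θ : T → T} (hρ : ∀ v, φ (vertex v) = vertex (ρ v))
  (hθ : ∀ τ, φ (edge τ) = edge (θ τ))
include hρ hθ

omit hcover in
theorem mem_apply_iff {v : V} {τ : T} : ρ v ∈ mem (θ τ) ↔ v ∈ mem τ := by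
  rw [← vertex_le_edge, ← hρ, ← hθ, φ.le_iff_le, vertex_le_edge]

omit hcover hθ in
theorem injective_of_apply_vertex : Function.Injective ρ := fun v w h =>
  vertex.inj (φ.injective ((hρ v).trans (h ▸ (hρ w).symm)))

theorem image_mem_eq [DecidableEq V] (τ : T) : (mem τ).image ρ = mem (θ τ) := by
  ext w
  obtain ⟨u, hu⟩ := exists_apply_vertex_eq hcover φ.symm w
  have hρu : ρ u = w := by simpa [← hu] using (hρ u).symm
  simp only [Finset.mem_image]
  exact ⟨fun ⟨v, hv, hvw⟩ => hvw ▸ (mem_apply_iff hρ hθ).2 hv,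
    fun hw => ⟨u, (mem_apply_iff hρ hθ).1 (hρu ▸ hw), hρu⟩⟩

theorem card_mem_apply [DecidableEq V] (τ : T) : (mem (θ τ)).card = (mem τ).card := by
  rw [← image_mem_eq hcover hρ hθ,
    Finset.card_image_of_injective _ (injective_of_apply_vertex hρ)]

end Automorphisms

theorem orderIso_ext (hcover : ∀ v, ∃ τ, v ∈ mem τ)
    (hsep : ∀ v w, (∀ τ, v ∈ mem τ ↔ w ∈ mem τ) → v = w)
    {φ ψ : IncidencePoset mem ≃o IncidencePoset mem} (h : ∀ τ, φ (edge τ) = ψ (edge τ)) :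
    φ = ψ := by
  ext x
  rcases x with v | τ
  · obtain ⟨a, ha⟩ := exists_apply_vertex_eq hcover φ v
    obtain ⟨b, hb⟩ := exists_apply_vertex_eq hcover ψ v
    rw [ha, hb, hsep a b fun σ => ?_]
    obtain ⟨τ, hτ⟩ := exists_apply_edge_eq hcover φ.symm σ
    have hσ : φ (edge τ) = edge σ := by simpa using congr(φ $hτ).symm
    rw [← vertex_le_edge, ← vertex_le_edge, ← ha, ← hb, ← hσ, φ.le_iff_le, h, ψ.le_iff_le]
  · exact h τ

def relabel (σ : V ≃ V) (π : T ≃ T) (h : ∀ v τ, σ v ∈ mem (π τ) ↔ v ∈ mem τ) :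
    IncidencePoset mem ≃o IncidencePoset mem where
  toFun
    | vertex v => vertex (σ v)
    | edge τ => edge (π τ)
  invFun
    | vertex v => vertex (σ.symm v)
    | edge τ => edge (π.symm τ)
  left_inv := by rintro (v | τ) <;> simp
  right_inv := by rintro (v | τ) <;> simp
  map_rel_iff' := by rintro (v | τ) (w | ρ) <;> simp [h]

end IncidencePoset

noncomputable section

namespace CayleyHypergraph

open IncidencePoset

inductive BlockKind (S : Type*)
  | column
  | flag
  | arrow (s : S)

instance {S : Type*} [Finite S] : Finite (BlockKind S) :=
  Finite.of_injective (β := Option (Option S))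
    (fun | .column => none | .flag => some none | .arrow s => some (some s))
    (by rintro (_ | _ | _) (_ | _ | _) h <;> cases h <;> rfl)

variable (G : Type*) [Group G] [Finite G]

abbrev Generator := {s : G // s ≠ 1}

abbrev arrowCount : ℕ := Nat.card (Generator G)

def arrowIndex : Generator G ≃ Fin (arrowCount G) := Finite.equivFin _

abbrev Slot := Fin (arrowCount G + 3)

def target : Slot G := ⟨arrowCount G + 1, by omega⟩

def anchor : Slot G := ⟨arrowCount G + 2, by omega⟩

def blockSize : BlockKind (Generator G) → ℕ
  | .column => arrowCount G + 3
  | .flag => 2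
  | .arrow s => arrowIndex G s + 3

variable {G}

theorem blockSize_injective : Function.Injective (blockSize G) := by
  rintro (_ | _ | s) (_ | _ | s') h <;> simp only [blockSize] at h
  case arrow.arrow => exact congrArg _ ((arrowIndex G).injective (Fin.ext (by omega)))
  all_goals first | rfl | omega

theorem arrowCount_pos [Nontrivial G] : 0 < arrowCount G :=
  have ⟨s, hs⟩ := exists_ne (1 : G)
  have : Nonempty (Generator G) := ⟨⟨s, hs⟩⟩
  Nat.card_pos

variable (G) [DecidableEq G]

/-- Slots `0, …, arrowCount G` of a column are padding, `target` receives the arrows and `anchor`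
holds the flag; the padding makes arrows of different generators differ in size. -/
def block : G × BlockKind (Generator G) → Finset (G × Slot G)
  | (g, .column) => {g} ×ˢ Finset.univ
  | (g, .flag) => {(g, 0), (g, anchor G)}
  | (g, .arrow s) =>
    {g} ×ˢ Finset.univ.filter (fun j : Slot G => (j : ℕ) < arrowIndex G s + 2) ∪
      {(g * s, target G)}

abbrev Space := IncidencePoset (block G)

variable {G}

theorem mem_column {h g : G} {j : Slot G} : (h, j) ∈ block G (g, .column) ↔ h = g := by
  simp [block, eq_comm]

theorem mem_flag {h g : G} {j : Slot G} :
    (h, j) ∈ block G (g, .flag) ↔ h = g ∧ ((j : ℕ) = 0 ∨ (j : ℕ) = arrowCount G + 2) := by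
  simp only [block, Finset.mem_insert, Finset.mem_singleton, Prod.mk.injEq, Fin.ext_iff, anchor,
    Fin.val_zero, and_or_left]

theorem mem_arrow {h g : G} {j : Slot G} {s : Generator G} :
    (h, j) ∈ block G (g, .arrow s) ↔
      h = g ∧ (j : ℕ) < arrowIndex G s + 2 ∨ h = g * s ∧ (j : ℕ) = arrowCount G + 1 := by
  simp only [block, Finset.mem_union, Finset.mem_product, Finset.mem_singleton, Finset.mem_filter,
    Finset.mem_univ, true_and, Prod.mk.injEq, Fin.ext_iff, target]

theorem mem_block_column (v : G × Slot G) : v ∈ block G (v.1, .column) :=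
  mem_column.2 rfl

theorem card_block (τ : G × BlockKind (Generator G)) : (block G τ).card = blockSize G τ.2 := by
  obtain ⟨g, _ | _ | s⟩ := τ
  · simp [block, blockSize]
  · simp [block, blockSize, Fin.ext_iff, anchor]
  · rw [block, Finset.card_union_of_disjoint (by simp [Fin.ext_iff, target]; omega),
      Finset.card_product, Fin.card_filter_val_lt]
    simp [blockSize]
    omega

theorem exists_two_mem_block (τ : G × BlockKind (Generator G)) :
    ∃ v w, v ≠ w ∧ v ∈ block G τ ∧ w ∈ block G τ := by
  obtain ⟨g, _ | _ | s⟩ := τ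
  · exact ⟨(g, 0), (g, anchor G), by simp [Fin.ext_iff, anchor], mem_column.2 rfl,
      mem_column.2 rfl⟩
  · exact ⟨(g, 0), (g, anchor G), by simp [Fin.ext_iff, anchor], mem_flag.2 ⟨rfl, by simp⟩,
      mem_flag.2 ⟨rfl, by simp [anchor]⟩⟩
  · exact ⟨(g, 0), (g * s, target G), by simp [Fin.ext_iff, target],
      mem_arrow.2 (Or.inl ⟨rfl, by simp⟩), mem_arrow.2 (Or.inr ⟨rfl, rfl⟩)⟩

theorem mem_block_mul_left_iff (t : G) (v : G × Slot G) (τ : G × BlockKind (Generator G)) :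
    (t * v.1, v.2) ∈ block G (t * τ.1, τ.2) ↔ v ∈ block G τ := by
  obtain ⟨h, j⟩ := v
  obtain ⟨g, _ | _ | s⟩ := τ <;> simp [mem_column, mem_flag, mem_arrow, mul_assoc]

variable (G) in
def translate : G →* (Space G ≃ₜ Space G) where
  toFun t := (relabel ((Equiv.mulLeft t).prodCongr (.refl _))
    ((Equiv.mulLeft t).prodCongr (.refl _))
    fun v τ => mem_block_mul_left_iff t v τ).toHomeomorphOfIsUpperSet
  map_one' := by
    ext (⟨h, j⟩ | ⟨g, k⟩)
    · exact congrArg vertex (Prod.ext (one_mul h) rfl)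
    · exact congrArg edge (Prod.ext (one_mul g) rfl)
  map_mul' a b := by
    ext (⟨h, j⟩ | ⟨g, k⟩)
    · exact congrArg vertex (Prod.ext (mul_assoc a b h) rfl)
    · exact congrArg edge (Prod.ext (mul_assoc a b g) rfl)

theorem translate_vertex (t : G) (v : G × Slot G) :
    translate G t (vertex v) = vertex (t * v.1, v.2) :=
  rfl

section Rigidity

/-! An automorphism acts on the points by `ρ` and sends the block `(g, k)` to `(β g k, k)`. -/

variable {ρ : G × Slot G → G × Slot G} {β : G → BlockKind (Generator G) → G}
  (hmem : ∀ v g k, ρ v ∈ block G (β g k, k) ↔ v ∈ block G (g, k))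
include hmem

theorem fst_apply_eq (v : G × Slot G) : (ρ v).1 = β v.1 .column :=
  mem_column.1 ((hmem v v.1 .column).2 (mem_column.2 rfl))

theorem injective_map_column : Function.Injective (β · .column) := fun g g' hgg' => by
  have : ρ (g, 0) ∈ block G (β g' .column, .column) :=
    mem_column.2 ((fst_apply_eq hmem _).trans hgg')
  exact mem_column.1 ((hmem _ _ _).1 this)

theorem map_flag (g : G) : β g .flag = β g .column :=
  (mem_flag.1 ((hmem (g, 0) g .flag).2 (mem_flag.2 ⟨rfl, by simp⟩))).1.symm.trans
    (fst_apply_eq hmem _)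

/-- Slots `0` and `1` of column `g` lie in the arrow, so their images are two points of the image
arrow in one column, which must be the column the image arrow starts from. -/
theorem map_arrow (hρ : Function.Injective ρ) (g : G) (s : Generator G) :
    β g (.arrow s) = β g .column := by
  by_contra hne
  have hpad : ∀ j : Slot G, (j : ℕ) < 2 → ρ (g, j) = (β g (.arrow s) * s, target G) := by
    intro j hj
    rcases mem_arrow.1 ((hmem (g, j) g (.arrow s)).2 (mem_arrow.2 (Or.inl ⟨rfl, by omega⟩)))
      with ⟨h₁, -⟩ | ⟨h₁, h₂⟩
    · exact absurd (h₁.symm.trans (fst_apply_eq hmem _)) hne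
    · exact Prod.ext h₁ (Fin.ext h₂)
  have := hρ ((hpad ⟨0, by omega⟩ (by simp)).trans (hpad ⟨1, by omega⟩ (by simp)).symm)
  simp at this

theorem map_column_mul (hρ : Function.Injective ρ) (g : G) (s : Generator G) :
    β (g * s) .column = β g .column * s := by
  have h := (hmem (g * s, target G) g (.arrow s)).2 (mem_arrow.2 (Or.inr ⟨rfl, rfl⟩))
  rw [map_arrow hmem hρ] at h
  rcases mem_arrow.1 h with ⟨h₁, -⟩ | ⟨h₁, -⟩
  · have := injective_map_column hmem ((fst_apply_eq hmem _).symm.trans h₁)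
    exact absurd (mul_eq_left.1 this) s.2
  · exact (fst_apply_eq hmem _).symm.trans h₁

theorem map_eq_mul (hρ : Function.Injective ρ) (g : G) (k : BlockKind (Generator G)) :
    β g k = β 1 .column * g := by
  have hcol : β g .column = β 1 .column * g := by
    by_cases hg : g = 1
    · simp [hg]
    · simpa using map_column_mul hmem hρ 1 ⟨g, hg⟩
  rcases k with _ | _ | s
  · exact hcol
  · rw [map_flag hmem, hcol]
  · rw [map_arrow hmem hρ, hcol]

end Rigidity

theorem exists_apply_edge_eq_translate (φ : Space G ≃o Space G) :
    ∃ t, ∀ τ, φ (edge τ) = translate G t (edge τ) := by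
  have hcover : ∀ v, ∃ τ, v ∈ block G τ := fun v => ⟨_, mem_block_column v⟩
  choose ρ hρ using exists_apply_vertex_eq hcover φ
  choose θ hθ using exists_apply_edge_eq hcover φ
  have hkind (τ) : (θ τ).2 = τ.2 :=
    blockSize_injective (by rw [← card_block, ← card_block, card_mem_apply hcover hρ hθ])
  have hθβ (g k) : θ (g, k) = ((θ (g, k)).1, k) := Prod.ext rfl (hkind _)
  have hmem (v g k) : ρ v ∈ block G ((θ (g, k)).1, k) ↔ v ∈ block G (g, k) := by
    rw [← hθβ]
    exact mem_apply_iff hρ hθ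
  refine ⟨(θ (1, .column)).1, fun ⟨g, k⟩ => ?_⟩
  rw [hθ, hθβ, map_eq_mul (β := fun g k => (θ (g, k)).1) hmem (injective_of_apply_vertex hρ)]
  rfl

section Nontrivial

variable [Nontrivial G]

theorem exists_two_blocks (v : G × Slot G) :
    ∃ τ σ, τ ≠ σ ∧ v ∈ block G τ ∧ v ∈ block G σ := by
  obtain ⟨h, j⟩ := v
  refine ⟨(h, .column), ?_⟩
  have hn := arrowCount_pos (G := G)
  obtain ⟨s, hs⟩ := exists_ne (1 : G)
  by_cases hanchor : (j : ℕ) = arrowCount G + 2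
  · exact ⟨(h, .flag), by simp, mem_column.2 rfl, mem_flag.2 ⟨rfl, Or.inr hanchor⟩⟩
  by_cases htarget : (j : ℕ) = arrowCount G + 1
  · exact ⟨(h * s⁻¹, .arrow ⟨s, hs⟩), by simp, mem_column.2 rfl,
      mem_arrow.2 (Or.inr ⟨by simp, htarget⟩)⟩
  · set last := (arrowIndex G).symm ⟨arrowCount G - 1, by omega⟩
    have hlast : (arrowIndex G last : ℕ) = arrowCount G - 1 := by simp [last]
    exact ⟨(h, .arrow last), by simp, mem_column.2 rfl, mem_arrow.2 (Or.inl ⟨rfl, by omega⟩)⟩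

/-- A padding slot `j ≥ 2` is the first one missing from the arrow of index `j - 2`, slots `0`
and `1` differ on the flag, and the target and the anchor on the arrows into the column. -/
theorem eq_of_forall_mem_block_iff {v w : G × Slot G}
    (hvw : ∀ τ, v ∈ block G τ ↔ w ∈ block G τ) : v = w := by
  obtain ⟨h, i⟩ := v
  obtain ⟨h', j⟩ := w
  obtain rfl : h = h' := (mem_column.1 ((hvw (h, .column)).1 (mem_column.2 rfl))).symm
  obtain ⟨s, hs⟩ := exists_ne (1 : G)
  have hflag := hvw (h, .flag)
  have htarget := hvw (h * s⁻¹, .arrow ⟨s, hs⟩)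
  have hpad : ∀ m < arrowCount G, (i : ℕ) < m + 2 ↔ (j : ℕ) < m + 2 := fun m hm => by
    simpa [mem_arrow, ((arrowIndex G).symm ⟨m, hm⟩).2] using
      hvw (h, .arrow ((arrowIndex G).symm ⟨m, hm⟩))
  simp only [mem_flag, mem_arrow, true_and, left_eq_mul, inv_eq_one, hs, false_and, false_or,
    inv_mul_cancel_right] at hflag htarget
  have h₁ := hpad (i - 2)
  have h₂ := hpad (j - 2)
  have h₃ := hpad (arrowCount G - 1)
  have hn := arrowCount_pos (G := G)
  exact Prod.ext rfl (Fin.ext (show (i : ℕ) = j by omega))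

theorem noBeatPoints : NoBeatPoints (Space G) :=
  IncidencePoset.noBeatPoints exists_two_blocks exists_two_mem_block

theorem translate_bijective : Function.Bijective (translate G) := by
  refine ⟨fun a b hab => ?_, fun h => ?_⟩
  · simpa [translate_vertex] using congr($hab (vertex ((1 : G), 0)))
  · obtain ⟨t, ht⟩ := exists_apply_edge_eq_translate h.toOrderIsoOfIsUpperSet
    have := orderIso_ext (fun v => ⟨_, mem_block_column v⟩)
      (fun _ _ => eq_of_forall_mem_block_iff) (ψ := (translate G t).toOrderIsoOfIsUpperSet) ht
    exact ⟨t, Homeomorph.ext fun x => congr($this x).symm⟩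

end Nontrivial

end CayleyHypergraph

end

/-- Every finite group is the group of homotopy classes of self-homotopy
equivalences of some finite topological space, with the group operation induced by
composition. -/
theorem realization_finite_space (G : Type*) [Group G] [Finite G] :
    ∃ (X : Type) (_ : TopologicalSpace X), Finite X ∧
      ∃ e : Quotient (homotopySetoid X) ≃ G,
        ∀ f g : ContinuousMap.HomotopyEquiv X X,
          e (Quotient.mk (homotopySetoid X) (f.trans g)) =
            e (Quotient.mk (homotopySetoid X) f) * e (Quotient.mk (homotopySetoid X) g) := by
  classical
  rcases subsingleton_or_nontrivial G with hG | hG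
  · exact ⟨PUnit, inferInstance, inferInstance,
      exists_homotopyClasses_equiv (fun _ _ => Subsingleton.elim _ _)
        (.ofBijective (1 : G →* (PUnit ≃ₜ PUnit))
          ⟨fun _ _ _ => Subsingleton.elim _ _, fun _ => ⟨1, Homeomorph.ext fun _ => rfl⟩⟩)⟩
  · have : Nontrivial (Shrink.{0} G) := (equivShrink.{0} G).symm.nontrivial
    exact ⟨CayleyHypergraph.Space (Shrink.{0} G), inferInstance, inferInstance,
      exists_homotopyClasses_equiv (fun _ => CayleyHypergraph.noBeatPoints.eq_id_of_homotopic_id)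
        (Shrink.mulEquiv.symm.trans (.ofBijective _ CayleyHypergraph.translate_bijective))⟩
end

section
/- For every finite group G there exists a finite poset P such that the order-automorphism group of P is isomorphic to G. -/
/-!
Realize `H` on a "Cayley poset": its minimal elements are the vertices `g ∈ H`, and for every
edge `g → g * s` there is a chain whose bottom lies above `g`, whose top lies above `g * s`, and
whose length `ι s + 1` encodes the label `s` injectively. Left multiplication acts by order
automorphisms. Conversely, an automorphism permutes the minimal elements, sends chain bottoms
(the minimal non-minimal elements) to chain bottoms, and, following covers up to the maximal
element, each chain onto a chain of the same length, hence with the same label. Comparing the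
vertices below the tops, it commutes with right multiplications, so it is the left
multiplication by the image of `1`.
-/

open Function

theorem OrderIso.minimal_not_isMin_apply_iff {α β : Type*} [Preorder α] [Preorder β]
    (φ : α ≃o β) {x : α} : Minimal (fun y => ¬ IsMin y) (φ x) ↔ Minimal (fun y => ¬ IsMin y) x := by
  have := φ.toOrderEmbedding.minimal_apply_mem_iff (t := {y | ¬ IsMin y}) (x := x)
    (fun y _ => φ.surjective y)
  simpa only [Set.mem_ofPred_eq, OrderIso.coe_toOrderEmbedding, OrderIso.isMin_apply] using this

/-- `edge g s k` is the point at height `k` of the chain attached to the edge `g → g * s`. Heights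
run up to `ι s + 1` rather than `ι s` so that the bottom of a chain never lies above its target. -/
inductive CayleyPoset (H : Type*) (ι : H → ℕ)
  | vertex (g : H)
  | edge (g s : H) (k : ℕ) (hk : k ≤ ι s + 1)

namespace CayleyPoset

section Order

variable {H : Type*} [Mul H] {ι : H → ℕ}

protected def Le : CayleyPoset H ι → CayleyPoset H ι → Prop
  | vertex g, vertex g' => g = g'
  | vertex g, edge g' s k _ => g = g' ∨ g = g' * s ∧ k = ι s + 1
  | edge _ _ _ _, vertex _ => False
  | edge g s k _, edge g' s' k' _ => g = g' ∧ s = s' ∧ k ≤ k'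

instance : PartialOrder (CayleyPoset H ι) where
  le := CayleyPoset.Le
  le_refl := by rintro (_ | _) <;> simp [CayleyPoset.Le]
  le_trans := by
    rintro (_ | _) (_ | _) (_ | _) <;> simp only [CayleyPoset.Le] <;> grind
  le_antisymm := by
    rintro (_ | _) (_ | _) <;> simp only [CayleyPoset.Le] <;> grind

@[simp] lemma vertex_le_vertex {g g' : H} : (vertex g : CayleyPoset H ι) ≤ vertex g' ↔ g = g' :=
  Iff.rfl

@[simp] lemma vertex_le_edge {g g' s : H} {k : ℕ} {hk : k ≤ ι s + 1} :
    (vertex g : CayleyPoset H ι) ≤ edge g' s k hk ↔ g = g' ∨ g = g' * s ∧ k = ι s + 1 :=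
  Iff.rfl

@[simp] lemma not_edge_le_vertex {g g' s : H} {k : ℕ} {hk : k ≤ ι s + 1} :
    ¬ (edge g s k hk : CayleyPoset H ι) ≤ vertex g' :=
  id

@[simp] lemma edge_le_edge {g g' s s' : H} {k k' : ℕ} {hk : k ≤ ι s + 1} {hk' : k' ≤ ι s' + 1} :
    (edge g s k hk : CayleyPoset H ι) ≤ edge g' s' k' hk' ↔ g = g' ∧ s = s' ∧ k ≤ k' :=
  Iff.rfl

lemma vertex_lt_edge {g s : H} {k : ℕ} {hk : k ≤ ι s + 1} :
    (vertex g : CayleyPoset H ι) < edge g s k hk :=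
  lt_of_le_not_ge (by simp) not_edge_le_vertex

@[simp] lemma edge_lt_edge {g g' s s' : H} {k k' : ℕ} {hk : k ≤ ι s + 1} {hk' : k' ≤ ι s' + 1} :
    (edge g s k hk : CayleyPoset H ι) < edge g' s' k' hk' ↔ g = g' ∧ s = s' ∧ k < k' := by
  rw [lt_iff_le_not_ge, edge_le_edge, edge_le_edge]
  grind

instance [Finite H] : Finite (CayleyPoset H ι) := by
  obtain ⟨N, hN⟩ := (Set.finite_range ι).bddAbove
  have hbound (s : H) : ι s + 1 < N + 2 := by have := hN ⟨s, rfl⟩; omega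
  exact Finite.of_injective (β := H ⊕ H × H × Fin (N + 2))
    (fun | vertex g => .inl g | edge g s k hk => .inr (g, s, ⟨k, hk.trans_lt (hbound s)⟩))
    (by rintro (_ | _) (_ | _) h <;> simp_all)

lemma isMin_iff {x : CayleyPoset H ι} : IsMin x ↔ ∃ g, x = vertex g := by
  constructor
  · rcases x with g | ⟨g, s, k, hk⟩
    · exact fun _ => ⟨g, rfl⟩
    · intro h
      exact absurd (h (show vertex g ≤ edge g s k hk by simp)) (by simp)
  · rintro ⟨g, rfl⟩ (_ | _) h <;> simp_all

lemma minimal_not_isMin_iff {x : CayleyPoset H ι} :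
    Minimal (fun y => ¬ IsMin y) x ↔ ∃ g s, x = edge g s 0 (Nat.zero_le _) := by
  simp only [Minimal, isMin_iff, not_exists]
  constructor
  · rcases x with g | ⟨g, s, k, hk⟩
    · exact fun h => absurd rfl (h.1 g)
    · rintro ⟨-, h⟩
      simpa using h (y := edge g s 0 (Nat.zero_le _)) (by simp) (by simp)
  · rintro ⟨g, s, rfl⟩
    refine ⟨by simp, ?_⟩
    rintro (_ | _) hy hle <;> simp_all

lemma edge_covBy_iff {g s : H} {k : ℕ} {hk : k ≤ ι s + 1} {y : CayleyPoset H ι} :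
    edge g s k hk ⋖ y ↔ ∃ hk' : k + 1 ≤ ι s + 1, y = edge g s (k + 1) hk' := by
  constructor
  · rintro ⟨hlt, hbetween⟩
    rcases y with g' | ⟨g', s', k', hk'⟩
    · exact absurd hlt.le (by simp)
    · obtain ⟨rfl, rfl, hkk'⟩ := edge_lt_edge.mp hlt
      obtain rfl | hlt' := (Nat.succ_le_of_lt hkk').eq_or_lt
      · exact ⟨hk', rfl⟩
      · exact (hbetween (c := edge g s (k + 1) (by omega)) (by simp) (by simpa using hlt')).elim
  · rintro ⟨hk', rfl⟩
    refine ⟨by simp, ?_⟩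
    rintro (_ | _) h₁ h₂
    · exact not_edge_le_vertex h₁.le
    · simp only [edge_lt_edge] at h₁ h₂
      omega

lemma isMax_edge_iff {g s : H} {k : ℕ} {hk : k ≤ ι s + 1} :
    IsMax (edge g s k hk : CayleyPoset H ι) ↔ k = ι s + 1 := by
  constructor
  · intro h
    have := h (b := edge g s (ι s + 1) le_rfl) (by simpa using hk)
    simp only [edge_le_edge] at this
    omega
  · rintro rfl (_ | _) h <;> simp_all

end Order

variable {H : Type*} [Group H] {ι : H → ℕ}

instance : SMul H (CayleyPoset H ι) where
  smul a
    | vertex g => vertex (a * g)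
    | edge g s k hk => edge (a * g) s k hk

@[simp] lemma smul_vertex (a g : H) : a • (vertex g : CayleyPoset H ι) = vertex (a * g) := rfl

@[simp] lemma smul_edge (a g s : H) (k : ℕ) (hk : k ≤ ι s + 1) :
    a • (edge g s k hk : CayleyPoset H ι) = edge (a * g) s k hk := rfl

instance : MulAction H (CayleyPoset H ι) where
  one_smul := by rintro (_ | _) <;> simp
  mul_smul a b := by rintro (_ | _) <;> simp [mul_assoc]

lemma smul_le_smul_iff (a : H) {x y : CayleyPoset H ι} : a • x ≤ a • y ↔ x ≤ y := by
  rcases x with _ | _ <;> rcases y with _ | _ <;> simp [mul_assoc]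

def toOrderIso : H →* (CayleyPoset H ι ≃o CayleyPoset H ι) where
  toFun a := { MulAction.toPerm a with map_rel_iff' := smul_le_smul_iff a }
  map_one' := by ext x; exact one_smul H x
  map_mul' a b := by ext x; exact mul_smul a b x

@[simp] lemma toOrderIso_apply (a : H) (x : CayleyPoset H ι) : toOrderIso a x = a • x := rfl

lemma toOrderIso_injective : Injective (toOrderIso : H → CayleyPoset H ι ≃o _) := by
  intro a b h
  simpa using DFunLike.congr_fun h (vertex 1)

section Rigidity

variable (φ : CayleyPoset H ι ≃o CayleyPoset H ι)

lemma exists_apply_vertex (g : H) : ∃ g', φ (vertex g) = vertex g' :=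
  isMin_iff.mp (φ.isMin_apply.mpr (isMin_iff.mpr ⟨g, rfl⟩))

lemma exists_apply_edge_zero {g g' : H} (h : φ (vertex g) = vertex g') (s : H) :
    ∃ s', φ (edge g s 0 (Nat.zero_le _)) = edge g' s' 0 (Nat.zero_le _) := by
  obtain ⟨g'', s', hs'⟩ := minimal_not_isMin_iff.mp
    (φ.minimal_not_isMin_apply_iff.mpr (minimal_not_isMin_iff.mpr ⟨g, s, rfl⟩))
  have hlt := φ.strictMono (vertex_lt_edge (g := g) (s := s) (k := 0) (hk := Nat.zero_le _))
  rw [h, hs'] at hlt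
  obtain rfl : g' = g'' := by simpa using hlt.le
  exact ⟨s', hs'⟩

lemma apply_edge_of_apply_edge_zero {g g' s s' : H}
    (h : φ (edge g s 0 (Nat.zero_le _)) = edge g' s' 0 (Nat.zero_le _)) (k : ℕ)
    (hk : k ≤ ι s + 1) : ∃ hk' : k ≤ ι s' + 1, φ (edge g s k hk) = edge g' s' k hk' := by
  induction k with
  | zero => exact ⟨_, h⟩
  | succ k ih =>
    obtain ⟨hk', hφ⟩ := ih (by omega)
    have hcov := (apply_covBy_apply_iff φ).mpr
      (edge_covBy_iff.mpr ⟨hk, rfl⟩ : edge g s k (by omega) ⋖ edge g s (k + 1) hk)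
    rwa [hφ, edge_covBy_iff] at hcov

variable (hι : Injective ι)
include hι

lemma apply_edge {g g' : H} (h : φ (vertex g) = vertex g') (s : H) (k : ℕ) (hk : k ≤ ι s + 1) :
    φ (edge g s k hk) = edge g' s k hk := by
  obtain ⟨s', h₀⟩ := exists_apply_edge_zero φ h s
  have hchain := apply_edge_of_apply_edge_zero φ h₀
  obtain ⟨hs', htop⟩ := hchain (ι s + 1) le_rfl
  have hmax := φ.isMax_apply.mpr (isMax_edge_iff.mpr rfl : IsMax (edge g s (ι s + 1) le_rfl))
  rw [htop, isMax_edge_iff] at hmax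
  obtain rfl : s = s' := hι (by omega)
  exact (hchain k hk).2

lemma apply_vertex_mul {g g' : H} (h : φ (vertex g) = vertex g') (s : H) :
    φ (vertex (g * s)) = vertex (g' * s) := by
  obtain ⟨g'', hg''⟩ := exists_apply_vertex φ (g * s)
  have hle := φ.monotone (show vertex (g * s) ≤ edge g s (ι s + 1) le_rfl by simp)
  rw [hg'', apply_edge φ hι h, vertex_le_edge] at hle
  rcases hle with rfl | ⟨rfl, -⟩
  · have : g * s = g := by simpa using φ.injective (hg''.trans h.symm)
    simp_all
  · exact hg''

lemma eq_toOrderIso {a : H} (h : φ (vertex 1) = vertex a) : φ = toOrderIso a := by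
  have hv (g : H) : φ (vertex g) = vertex (a * g) := by simpa using apply_vertex_mul φ hι h g
  ext (g | ⟨g, s, k, hk⟩)
  · simp [hv]
  · simp [apply_edge φ hι (hv g)]

end Rigidity

lemma toOrderIso_surjective (hι : Injective ι) :
    Surjective (toOrderIso : H → CayleyPoset H ι ≃o _) := fun φ =>
  let ⟨a, ha⟩ := exists_apply_vertex φ 1
  ⟨a, (eq_toOrderIso φ hι ha).symm⟩

noncomputable def mulEquivOrderIso (hι : Injective ι) :
    H ≃* (CayleyPoset H ι ≃o CayleyPoset H ι) :=
  MulEquiv.ofBijective toOrderIso ⟨toOrderIso_injective, toOrderIso_surjective hι⟩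

end CayleyPoset

/-- Every finite group is the group of order automorphisms of some finite poset. -/
theorem realization_finite_poset (G : Type*) [Group G] [Finite G] :
    ∃ (P : Type) (_ : PartialOrder P), Finite P ∧ Nonempty (G ≃* (P ≃o P)) := by
  obtain ⟨ι, hι⟩ := Countable.exists_injective_nat (Shrink.{0} G)
  exact ⟨CayleyPoset (Shrink.{0} G) ι, inferInstance, inferInstance,
    ⟨Shrink.mulEquiv.symm.trans (CayleyPoset.mulEquivOrderIso hι)⟩⟩
end

section
/- In a finite T0 space X, if x is an up-beat point then the inclusion X \ {x} ↪ X is a homotopy equivalence (the map sending x to the witness y and fixing all other points is a deformation retraction). -/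
section Aux

variable {X : Type*} [TopologicalSpace X]

lemma mem_minOpen_self (a : X) : a ∈ minOpen a :=
  Set.mem_sInter.2 fun _ hU => hU.2

lemma sle_mem {a b : X} (h : sle a b) {U : Set X} (hU : IsOpen U) (hb : b ∈ U) : a ∈ U :=
  Set.sInter_subset_of_mem (show IsOpen U ∧ b ∈ U from ⟨hU, hb⟩) (h (mem_minOpen_self a))

lemma isOpen_minOpen [Finite X] (a : X) : IsOpen (minOpen a) :=
  Set.Finite.isOpen_sInter (Set.toFinite _) fun _ hU => hU.1

lemma isOpen_of_dc [Finite X] {S : Set X} (h : ∀ a ∈ S, ∀ b, sle b a → b ∈ S) :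
    IsOpen S := by
  have hS : S = ⋃ a ∈ S, minOpen a := by
    ext b
    constructor
    · intro hb; exact Set.mem_biUnion hb (mem_minOpen_self b)
    · intro hb
      obtain ⟨a, ha, hba⟩ := Set.mem_iUnion₂.1 hb
      exact h a ha b (Set.sInter_subset_of_mem ⟨isOpen_minOpen a, hba⟩)
  rw [hS]
  exact isOpen_biUnion fun a _ => isOpen_minOpen a

end Aux

/-- If `x` is an up-beat point of a finite T0 space (with witness `y`), then the
inclusion `X \ {x} ↪ X` is a homotopy equivalence. -/
theorem upBeat_complement_inclusion_homotopyEquiv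
    {X : Type*} [TopologicalSpace X] [Finite X] [T0Space X] (x y : X)
    (h₁ : slt x y) (h₂ : ∀ z : X, slt x z → sle y z) :
    ∃ h : ContinuousMap.HomotopyEquiv {z : X // z ≠ x} X,
      ∀ z : {z : X // z ≠ x}, h.toFun z = z.val := by
  classical
  obtain ⟨hxy, hne⟩ := h₁
  set r : X → X := fun z => if z = x then y else z with hr
  have hrval : ∀ z, z ≠ x → r z = z := fun z hz => if_neg hz
  have hrx : r x = y := if_pos rfl
  have hrne : ∀ z, r z ≠ x := by
    intro z
    by_cases hz : z = x
    · subst hz; rw [hrx]; exact fun h => hne h.symm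
    · rw [hrval z hz]; exact hz
  have hmono : ∀ a b : X, sle a b → sle (r a) (r b) := by
    intro a b hab
    by_cases ha : a = x <;> by_cases hb : b = x
    · subst ha; subst hb; exact subset_rfl
    · subst ha
      rw [hrx, hrval b hb]
      exact h₂ b ⟨hab, fun h => hb h.symm⟩
    · subst hb
      rw [hrx, hrval a ha]
      exact hab.trans hxy
    · rw [hrval a ha, hrval b hb]; exact hab
  have hsle_self : ∀ z, sle z (r z) := by
    intro z
    by_cases hz : z = x
    · subst hz; rw [hrx]; exact hxy
    · rw [hrval z hz]; exact subset_rfl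
  have hrcont : Continuous r := by
    rw [continuous_def]
    intro U hU
    apply isOpen_of_dc
    intro a ha b hba
    exact sle_mem (hmono b a hba) hU ha
  let i : C({z : X // z ≠ x}, X) := ⟨Subtype.val, continuous_subtype_val⟩
  let r' : C(X, {z : X // z ≠ x}) := ⟨fun z => ⟨r z, hrne z⟩, hrcont.subtype_mk _⟩
  have hHcont : Continuous (fun p : unitInterval × X => if p.1 = 0 then r p.2 else p.2) := by
    rw [continuous_def]
    intro U hU
    have key : (fun p : unitInterval × X => if p.1 = 0 then r p.2 else p.2) ⁻¹' U
        = ((Set.univ : Set unitInterval) ×ˢ (r ⁻¹' U)) ∪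
          (({(0 : unitInterval)}ᶜ : Set unitInterval) ×ˢ U) := by
      ext ⟨t, z⟩
      by_cases ht : t = 0
      · subst ht
        simp [Set.mem_preimage, Set.mem_prod]
      · simp only [Set.mem_preimage, if_neg ht, Set.mem_union, Set.mem_prod, Set.mem_univ,
          true_and, Set.mem_compl_iff, Set.mem_singleton_iff, ht, not_false_iff]
        constructor
        · intro h; exact Or.inr h
        · rintro (h | h)
          · exact sle_mem (hsle_self z) hU h
          · exact h
    rw [key]
    exact (isOpen_univ.prod (hU.preimage hrcont)).union (isOpen_compl_singleton.prod hU)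
  have hright : (i.comp r').Homotopic (ContinuousMap.id X) := by
    refine ⟨⟨⟨fun p => if p.1 = 0 then r p.2 else p.2, hHcont⟩, ?_, ?_⟩⟩
    · intro z; simp [i, r']
    · intro z
      simp only [ContinuousMap.coe_mk, ContinuousMap.id_apply]
      rw [if_neg]
      exact fun h => (one_ne_zero (by exact_mod_cast congrArg Subtype.val h))
  have hleft : (r'.comp i).Homotopic (ContinuousMap.id _) := by
    have : r'.comp i = ContinuousMap.id _ := by
      ext z
      exact congrArg Subtype.val (Subtype.ext (hrval z.val z.prop) :
        (⟨r z.val, hrne z.val⟩ : {z : X // z ≠ x}) = z)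
    rw [this]
  exact ⟨⟨i, r', hleft, hright⟩, fun z => rfl⟩
end
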